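/- arXiv:2503.17321 — 2 statements merged into one kernel-verified Lean document; each statement's English description precedes it below -/
import Mathlib

section
/- Let I ⊆ k[x₁,…,xₙ] be a nonzero ideal over a field k of characteristic 0, let p be a point with ord_I(p) = a > 0. Then a maximal contact element exists at p: there is x ∈ (D^{a-1}(I))_p with D¹(x) = O_p (i.e., some first partial derivative of x is a unit at p). -/
open MvPolynomial

/-- Apply a list of partial derivative operators (one for each index in the list). -/
noncomputable def applyDerivs {k : Type*} [CommSemiring k] {n : ℕ}
    (l : List (Fin n)) (f : MvPolynomial (Fin n) k) : MvPolynomial (Fin n) k :=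
  l.foldr (fun i g => pderiv i g) f

/-- `Dord a I`: the ideal generated by all `∇ f` for `f ∈ I` and `∇` a composition of
at most `a` partial derivatives. -/
noncomputable def Dord {k : Type*} [CommSemiring k] {n : ℕ} (a : ℕ)
    (I : Ideal (MvPolynomial (Fin n) k)) : Ideal (MvPolynomial (Fin n) k) :=
  Ideal.span {g | ∃ f ∈ I, ∃ l : List (Fin n), l.length ≤ a ∧ g = applyDerivs l f}

/-- existence of a maximal contact element in characteristic 0.  If
`I` is a nonzero ideal and `ord_I(p) = a > 0` (some element of `Dᵃ(I)` is nonzero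
at `p`, while all elements of `Dᵇ(I)` for `b < a` vanish at `p`), then there is
`x ∈ D^{a-1}(I)` some first partial derivative of which is a unit (nonzero) at `p`. -/
theorem maximal_contact_exists {k : Type*} [Field k] [CharZero k] {n : ℕ}
    (I : Ideal (MvPolynomial (Fin n) k)) (hI : I ≠ ⊥) (p : Fin n → k) (a : ℕ)
    (ha : 0 < a)
    (hord₁ : ∃ f ∈ Dord a I, eval p f ≠ 0)
    (hord₂ : ∀ b < a, ∀ f ∈ Dord b I, eval p f = 0) :
    ∃ x ∈ Dord (a - 1) I, ∃ i : Fin n, eval p (pderiv i x) ≠ 0 := by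
  by_contra hcon
  push_neg at hcon
  obtain ⟨f, hf, hne⟩ := hord₁
  apply hne
  have hsub : Dord a I ≤ RingHom.ker (eval p) := by
    rw [Dord, Ideal.span_le]
    rintro g ⟨f, hfI, l, hl, rfl⟩
    rw [SetLike.mem_coe, RingHom.mem_ker]
    cases l with
    | nil =>
      have hmem : f ∈ Dord (a - 1) I :=
        Ideal.subset_span ⟨f, hfI, [], by simp, rfl⟩
      exact hord₂ (a - 1) (by omega) f hmem
    | cons i l' =>
      have hx : applyDerivs l' f ∈ Dord (a - 1) I :=
        Ideal.subset_span ⟨f, hfI, l', by simp at hl; omega, rfl⟩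
      have := hcon (applyDerivs l' f) hx i
      simpa [applyDerivs] using this
  exact RingHom.mem_ker.mp (hsub hf)
end

section
/- Let π: 𝔸^{n+m} → 𝔸^n be the smooth projection. For any ideal I of k[x₁,…,xₙ], the order of the extended ideal I' = I·k[x₁,…,x_{n+m}] at a point q of 𝔸^{n+m} equals the order of I at the projection of q, i.e. ord_{I'}(q) = ord_I(π(q)). -/
open MvPolynomial

namespace OrderFunctorialAux

variable {k : Type*} [CommSemiring k] {n : ℕ}

lemma applyDerivs_nil (f : MvPolynomial (Fin n) k) : applyDerivs [] f = f := rfl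

lemma applyDerivs_cons (i : Fin n) (l : List (Fin n)) (f : MvPolynomial (Fin n) k) :
    applyDerivs (i :: l) f = pderiv i (applyDerivs l f) := rfl

lemma le_Dord (a : ℕ) (I : Ideal (MvPolynomial (Fin n) k)) : I ≤ Dord a I := by
  intro f hf
  exact Ideal.subset_span ⟨f, hf, [], by simp [applyDerivs_nil]⟩

lemma Dord_mono {a b : ℕ} (hab : a ≤ b) (I : Ideal (MvPolynomial (Fin n) k)) :
    Dord a I ≤ Dord b I := by
  apply Ideal.span_mono
  rintro g ⟨f, hf, l, hl, rfl⟩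
  exact ⟨f, hf, l, hl.trans hab, rfl⟩

lemma pderiv_mem_Dord {a : ℕ} {I : Ideal (MvPolynomial (Fin n) k)} (i : Fin n)
    {g : MvPolynomial (Fin n) k} (hg : g ∈ Dord a I) :
    pderiv i g ∈ Dord (a + 1) I := by
  induction hg using Submodule.span_induction with
  | mem x hx =>
    obtain ⟨f, hf, l, hl, rfl⟩ := hx
    exact Ideal.subset_span ⟨f, hf, i :: l, by simpa using hl, rfl⟩
  | zero => simp
  | add x y _ _ hx hy => rw [map_add]; exact Ideal.add_mem _ hx hy
  | smul r x hxmem hx =>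
    rw [smul_eq_mul, pderiv_mul]
    exact Ideal.add_mem _
      (Ideal.mul_mem_left _ _ (Dord_mono (Nat.le_succ a) I hxmem))
      (Ideal.mul_mem_left _ _ hx)

variable {m : ℕ}

/-- The pullback homomorphism. -/
noncomputable def ρ : MvPolynomial (Fin n) k →+* MvPolynomial (Fin (n + m)) k :=
  ((rename (Fin.castAdd m) : MvPolynomial (Fin n) k →ₐ[k] MvPolynomial (Fin (n + m)) k) :
    MvPolynomial (Fin n) k →+* MvPolynomial (Fin (n + m)) k)

lemma ρ_apply (f : MvPolynomial (Fin n) k) :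
    (ρ (m := m)) f = rename (Fin.castAdd m) f := rfl

lemma pderiv_natAdd_rename (j : Fin m) (f : MvPolynomial (Fin n) k) :
    pderiv (Fin.natAdd n j) (rename (Fin.castAdd m) f) = 0 := by
  apply pderiv_eq_zero_of_notMem_vars
  intro hmem
  obtain ⟨x, -, hx⟩ := mem_vars_rename _ _ hmem
  have h1 : (Fin.castAdd m x : Fin (n + m)).val = x.val := rfl
  have h2 : (Fin.natAdd n j : Fin (n + m)).val = n + j.val := rfl
  have := congrArg Fin.val hx
  rw [h1, h2] at this
  omega

lemma pderiv_mem_map_Dord {a : ℕ} {I : Ideal (MvPolynomial (Fin n) k)}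
    (i : Fin (n + m)) {g : MvPolynomial (Fin (n + m)) k}
    (hg : g ∈ Ideal.map (ρ (m := m)) (Dord a I)) :
    pderiv i g ∈ Ideal.map (ρ (m := m)) (Dord (a + 1) I) := by
  rw [Ideal.map, Ideal.span] at hg
  induction hg using Submodule.span_induction with
  | mem x hx =>
    obtain ⟨f, hf, rfl⟩ := hx
    rw [ρ_apply]
    induction i using Fin.addCases with
    | left j =>
      rw [pderiv_rename (Fin.castAdd_injective n m)]
      exact Ideal.mem_map_of_mem _ (pderiv_mem_Dord j hf)
    | right j =>
      rw [pderiv_natAdd_rename]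
      exact Ideal.zero_mem _
  | zero => simp
  | add x y _ _ hx hy => rw [map_add]; exact Ideal.add_mem _ hx hy
  | smul r x hxmem hx =>
    rw [smul_eq_mul, pderiv_mul]
    refine Ideal.add_mem _ (Ideal.mul_mem_left _ _ ?_) (Ideal.mul_mem_left _ _ hx)
    have hxm : x ∈ Ideal.map (ρ (m := m)) (Dord a I) := by
      rw [Ideal.map, Ideal.span]; exact hxmem
    exact Ideal.map_mono (Dord_mono (Nat.le_succ a) I) hxm

lemma applyDerivs_mem_map_Dord {a : ℕ} {I : Ideal (MvPolynomial (Fin n) k)}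
    (l : List (Fin (n + m))) {g : MvPolynomial (Fin (n + m)) k}
    (hg : g ∈ Ideal.map (ρ (m := m)) (Dord a I)) :
    applyDerivs l g ∈ Ideal.map (ρ (m := m)) (Dord (a + l.length) I) := by
  induction l with
  | nil => simpa [applyDerivs_nil] using hg
  | cons i t ih =>
    rw [applyDerivs_cons]
    have := pderiv_mem_map_Dord (m := m) i (ih)
    refine Ideal.map_mono (Dord_mono ?_ I) this
    simp

lemma rename_applyDerivs (l : List (Fin n)) (f : MvPolynomial (Fin n) k) :
    rename (Fin.castAdd m) (applyDerivs l f)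
      = applyDerivs (l.map (Fin.castAdd m)) (rename (Fin.castAdd m) f) := by
  induction l with
  | nil => rfl
  | cons i t ih =>
    rw [applyDerivs_cons, List.map_cons, applyDerivs_cons, ← ih,
      pderiv_rename (Fin.castAdd_injective n m)]

lemma Dord_map_eq (a : ℕ) (I : Ideal (MvPolynomial (Fin n) k)) :
    Dord a (Ideal.map (ρ (m := m)) I) = Ideal.map (ρ (m := m)) (Dord a I) := by
  apply le_antisymm
  · rw [Dord, Ideal.span_le]
    rintro g ⟨f, hf, l, hl, rfl⟩
    have h0 : f ∈ Ideal.map (ρ (m := m)) (Dord 0 I) :=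
      Ideal.map_mono (le_Dord 0 I) hf
    have := applyDerivs_mem_map_Dord l h0
    exact Ideal.map_mono (Dord_mono (by simpa using hl) I) this
  · rw [Ideal.map_le_iff_le_comap]
    intro f hf
    rw [Ideal.mem_comap]
    induction hf using Submodule.span_induction with
    | mem x hx =>
      obtain ⟨f, hf, l, hl, rfl⟩ := hx
      rw [ρ_apply, rename_applyDerivs]
      exact Ideal.subset_span ⟨rename (Fin.castAdd m) f, Ideal.mem_map_of_mem _ hf,
        l.map (Fin.castAdd m), by simpa using hl, rfl⟩
    | zero => simp
    | add x y _ _ hx hy => rw [map_add]; exact Ideal.add_mem _ hx hy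
    | smul r x _ hx => rw [smul_eq_mul, map_mul]; exact Ideal.mul_mem_left _ _ hx

end OrderFunctorialAux

/-- functoriality of the order for the smooth projection
`𝔸^{n+m} → 𝔸^n`.  For any ideal `I` of `k[x₁,…,xₙ]`, the order of the extended
ideal `I' = I·k[x₁,…,x_{n+m}]` at a point `q` equals the order of `I` at the image
`π(q)`: for every `a`, `Dᵃ(I')` has an element not vanishing at `q` iff `Dᵃ(I)` has
an element not vanishing at `π(q)`; hence
`ord_{I'}(q) = min{a : some element of Dᵃ(I') is nonzero at q} = ord_I(π(q))`. -/
theorem order_functorial_projection {k : Type*} [Field k] [CharZero k] {n m : ℕ}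
    (I : Ideal (MvPolynomial (Fin n) k)) (q : Fin (n + m) → k) :
    ∀ a : ℕ,
      (∃ g ∈ Dord a (Ideal.map ((rename (Fin.castAdd m) : MvPolynomial (Fin n) k →ₐ[k] MvPolynomial (Fin (n + m)) k) : MvPolynomial (Fin n) k →+* MvPolynomial (Fin (n + m)) k) I),
          eval q g ≠ 0) ↔
      (∃ f ∈ Dord a I, eval (fun i => q (Fin.castAdd m i)) f ≠ 0) := by
  intro a
  rw [show ((rename (Fin.castAdd m) : MvPolynomial (Fin n) k →ₐ[k] MvPolynomial (Fin (n + m)) k) : MvPolynomial (Fin n) k →+* MvPolynomial (Fin (n + m)) k) = OrderFunctorialAux.ρ from rfl,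
    OrderFunctorialAux.Dord_map_eq]
  constructor
  · rintro ⟨g, hg, hq⟩
    by_contra hcon
    push_neg at hcon
    apply hq
    have : Ideal.map (OrderFunctorialAux.ρ (m := m)) (Dord a I)
        ≤ RingHom.ker (eval q : MvPolynomial (Fin (n + m)) k →+* k) := by
      rw [Ideal.map_le_iff_le_comap]
      intro f hf
      rw [Ideal.mem_comap, RingHom.mem_ker, OrderFunctorialAux.ρ_apply, eval_rename]
      exact hcon f hf
    exact this hg
  · rintro ⟨f, hf, hq⟩
    refine ⟨OrderFunctorialAux.ρ f, Ideal.mem_map_of_mem _ hf, ?_⟩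
    rw [OrderFunctorialAux.ρ_apply, eval_rename]
    exact hq
end
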